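/- Let Θ be a nonempty finite set, A : Θ → Fin N → ℝ, and suppose there exist i, j : Fin N and no θ ∈ Θ satisfying both A(θ, i) = max_{θ'} A(θ', i) and A(θ, j) = max_{θ'} A(θ', j). Then max_{θ ∈ Θ} ∑_k A(θ, k) < ∑_k max_{θ ∈ Θ} A(θ, k). -/
import Mathlib


/-- Strict version: if no single threshold is simultaneously optimal on
substreams i and j, every stationary threshold is strictly worse than the
per-substream-optimal dynamic strategy. -/
theorem stationary_strictly_below_dynamic
    {Θ : Type*} [Fintype Θ] [Nonempty Θ] {N : ℕ} (A : Θ → Fin N → ℝ)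
    (i j : Fin N)
    (hincomp : ¬ ∃ θ : Θ,
        A θ i = Finset.univ.sup' Finset.univ_nonempty (fun θ' : Θ => A θ' i) ∧
        A θ j = Finset.univ.sup' Finset.univ_nonempty (fun θ' : Θ => A θ' j)) :
    Finset.univ.sup' Finset.univ_nonempty (fun θ : Θ => ∑ k, A θ k) <
      ∑ k, Finset.univ.sup' Finset.univ_nonempty (fun θ : Θ => A θ k) := by
  push_neg at hincomp
  rw [Finset.sup'_lt_iff]
  intro θ _
  have hle : ∀ k ∈ Finset.univ, A θ k ≤
      Finset.univ.sup' Finset.univ_nonempty (fun θ' : Θ => A θ' k) := by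
    intro k _
    exact Finset.le_sup' (fun θ' : Θ => A θ' k) (Finset.mem_univ θ)
  rcases eq_or_lt_of_le (hle i (Finset.mem_univ i)) with hi | hi
  · exact Finset.sum_lt_sum hle ⟨j, Finset.mem_univ j,
      lt_of_le_of_ne (hle j (Finset.mem_univ j)) (hincomp θ hi)⟩
  · exact Finset.sum_lt_sum hle ⟨i, Finset.mem_univ i, hi⟩
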